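/- arXiv:1410.2075 — 2 statements merged into one kernel-verified Lean document; each statement's English description precedes it below -/
import Mathlib

section
/- A graph G is the square of a connected odd-sun-free split graph if and only if G is balanced and |⋂𝒞(G)| ≥ |𝒞(G)|. -/
open SimpleGraph

/-- The square of a graph: join distinct vertices at distance at most 2. -/
def Gsq {V : Type} (H : SimpleGraph V) : SimpleGraph V where
  Adj u v := u ≠ v ∧ (H.Adj u v ∨ ∃ w, H.Adj u w ∧ H.Adj w v)
  symm := by
    constructor
    rintro u v ⟨h1, h2⟩
    refine ⟨h1.symm, ?_⟩
    rcases h2 with h | ⟨w, hw1, hw2⟩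
    · exact Or.inl h.symm
    · exact Or.inr ⟨w, hw2.symm, hw1.symm⟩
  loopless := ⟨fun v h => h.1 rfl⟩

/-- `C`, `I` form a split partition of `H`: `C` a clique, `I` independent. -/
def IsSplitPart {V : Type} (H : SimpleGraph V) (C I : Set V) : Prop :=
  C ∪ I = Set.univ ∧ Disjoint C I ∧ H.IsClique C ∧ ∀ a ∈ I, ∀ b ∈ I, ¬ H.Adj a b

/-- `H` is a split graph. -/
def IsSplit {V : Type} (H : SimpleGraph V) : Prop := ∃ C I, IsSplitPart H C I

/-- The set of inclusion-maximal cliques of `G`. -/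
def maxCliques {V : Type} (G : SimpleGraph V) : Set (Set V) :=
  {Q | G.IsClique Q ∧ ∀ R, G.IsClique R → Q ⊆ R → Q = R}

/-- The intersection of all maximal cliques of `G`. -/
def core {V : Type} (G : SimpleGraph V) : Set V := ⋂₀ maxCliques G

/-- The condition `|⋂𝒞(G)| ≥ |𝒞(G)|`. -/
def cliqueIneq {V : Type} (G : SimpleGraph V) : Prop :=
  (maxCliques G).ncard ≤ (core G).ncard

/-- `G` contains an induced copy of `F`. -/
def InducedCopy {α V : Type} (F : SimpleGraph α) (G : SimpleGraph V) : Prop :=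
  ∃ f : α ↪ V, ∀ a b, F.Adj a b ↔ G.Adj (f a) (f b)

/-- The `ℓ`-sun: independent set `inl i`, clique `inr i`, with `inl i` adjacent
to exactly `inr i` and `inr (i+1)` (mod ℓ). -/
def sunGraph (ℓ : ℕ) : SimpleGraph (Fin ℓ ⊕ Fin ℓ) :=
  SimpleGraph.fromRel (fun a b =>
    match a, b with
    | .inr _, .inr _ => True
    | .inl i, .inr j => j.val = i.val ∨ j.val = (i.val + 1) % ℓ
    | _, _ => False)

/-- `H` contains no induced 3-sun. -/
def Sun3Free {V : Type} (H : SimpleGraph V) : Prop := ¬ InducedCopy (sunGraph 3) H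

/-- `H` contains no induced odd sun. -/
def OddSunFree {V : Type} (H : SimpleGraph V) : Prop :=
  ∀ ℓ, 3 ≤ ℓ → Odd ℓ → ¬ InducedCopy (sunGraph ℓ) H

/-- The cycle on `n` vertices. -/
def cycleG (n : ℕ) : SimpleGraph (Fin n) :=
  SimpleGraph.fromRel (fun i j => j.val = (i.val + 1) % n)

/-- `G` is chordal: no induced cycle of length at least 4. -/
def Chordal {V : Type} (G : SimpleGraph V) : Prop :=
  ∀ n, 4 ≤ n → ¬ InducedCopy (cycleG n) G

/-- `G` is strongly chordal: chordal and `ℓ`-sun-free for all `ℓ ≥ 3`. -/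
def StronglyChordal {V : Type} (G : SimpleGraph V) : Prop :=
  Chordal G ∧ ∀ ℓ, 3 ≤ ℓ → ¬ InducedCopy (sunGraph ℓ) G

/-- The trunk `T(G)`: a split graph whose clique is `𝒞(G)` and whose
independent set is `V(G) \ ⋂𝒞(G)`, with `v` adjacent to `Q` iff `v ∈ Q`. -/
def trunk {V : Type} (G : SimpleGraph V) :
    SimpleGraph (↥(maxCliques G) ⊕ ↥{v : V | v ∉ core G}) :=
  SimpleGraph.fromRel (fun a b =>
    match a, b with
    | .inl _, .inl _ => True
    | .inl Q, .inr v => (v : V) ∈ (Q : Set V)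
    | _, _ => False)

/-- The join of two graphs. -/
def joinG {α β : Type} (G : SimpleGraph α) (H : SimpleGraph β) : SimpleGraph (α ⊕ β) :=
  SimpleGraph.fromRel (fun a b =>
    match a, b with
    | .inl x, .inl y => G.Adj x y
    | .inr x, .inr y => H.Adj x y
    | .inl _, .inr _ => True
    | _, _ => False)

/-- The vertex-to-maximal-clique incidence bipartite graph of `G`. -/
def incidence {V : Type} (G : SimpleGraph V) : SimpleGraph (V ⊕ ↥(maxCliques G)) :=
  SimpleGraph.fromRel (fun a b =>
    match a, b with
    | .inl v, .inr Q => v ∈ (Q : Set V)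
    | _, _ => False)

/-- `G` is balanced: its vertex-to-maximal-clique incidence graph has no induced
cycle of length `2k` for odd `k ≥ 3`. -/
def BalancedGraph {V : Type} (G : SimpleGraph V) : Prop :=
  ∀ k, 3 ≤ k → Odd k → ¬ InducedCopy (cycleG (2 * k)) (incidence G)

/-- `G` is clique-Helly: every nonempty pairwise intersecting family of maximal
cliques has a common vertex. -/
def CliqueHelly {V : Type} (G : SimpleGraph V) : Prop :=
  ∀ S ⊆ maxCliques G, S.Nonempty →
    (∀ Q ∈ S, ∀ R ∈ S, (Q ∩ R).Nonempty) → (⋂₀ S).Nonempty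

/-- `G` is hereditary clique-Helly. -/
def HCH {V : Type} (G : SimpleGraph V) : Prop :=
  ∀ S : Set V, CliqueHelly (G.induce S)

/-- Adding an apex vertex adjacent exactly to the vertices of `C`. -/
def addApex {V : Type} (H : SimpleGraph V) (C : Set V) : SimpleGraph (Option V) :=
  SimpleGraph.fromRel (fun a b =>
    match a, b with
    | some x, some y => H.Adj x y
    | none, some y => y ∈ C
    | _, _ => False)

/-- A class of graphs is hereditary if it is closed under induced subgraphs
(up to isomorphism). -/
def Hereditary (𝒢 : ∀ α : Type, SimpleGraph α → Prop) : Prop :=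
  ∀ (α β : Type) (F : SimpleGraph α) (G : SimpleGraph β),
    𝒢 β G → InducedCopy F G → 𝒢 α F

/-- A class `𝒢` is simple: every `H ∈ 𝒢` can be mapped to some `H' ∈ 𝒢` with
`H'² ≅ H² ⊕ K₁`. -/
def SimpleClass (𝒢 : ∀ α : Type, SimpleGraph α → Prop) : Prop :=
  ∀ (α : Type) (H : SimpleGraph α), 𝒢 α H →
    ∃ (β : Type) (H' : SimpleGraph β), 𝒢 β H' ∧
      Nonempty (Gsq H' ≃g joinG (Gsq H) (⊤ : SimpleGraph (Fin 1)))

/-- The Hajós-type graphs `G₁,…,G₄` (`hajos 0 = G₁`, …, `hajos 3 = G₄`): the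
3-sun with `k` additional edges among its degree-2 vertices. -/
def hajos (k : ℕ) : SimpleGraph (Fin 3 ⊕ Fin 3) :=
  SimpleGraph.fromRel (fun a b =>
    match a, b with
    | .inr _, .inr _ => True
    | .inl i, .inr j => j.val = i.val ∨ j.val = (i.val + 1) % 3
    | .inl i, .inl j => (i.val = 0 ∧ j.val = 1 ∧ 1 ≤ k) ∨
        (i.val = 1 ∧ j.val = 2 ∧ 2 ≤ k) ∨ (i.val = 0 ∧ j.val = 2 ∧ 3 ≤ k)
    | _, _ => False)

section Helpers

variable {V : Type}

/-! ### Adjacency lemmas for the auxiliary graphs -/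

lemma sun_adj_ll {ℓ : ℕ} (i j : Fin ℓ) :
    ¬ (sunGraph ℓ).Adj (.inl i) (.inl j) := by
  simp [sunGraph, SimpleGraph.fromRel_adj]

lemma sun_adj_lr {ℓ : ℕ} (i j : Fin ℓ) :
    (sunGraph ℓ).Adj (.inl i) (.inr j) ↔
      (j.val = i.val ∨ j.val = (i.val + 1) % ℓ) := by
  simp [sunGraph, SimpleGraph.fromRel_adj]

lemma sun_adj_rl {ℓ : ℕ} (i j : Fin ℓ) :
    (sunGraph ℓ).Adj (.inr j) (.inl i) ↔
      (j.val = i.val ∨ j.val = (i.val + 1) % ℓ) := by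
  simp [sunGraph, SimpleGraph.fromRel_adj]

lemma sun_adj_rr {ℓ : ℕ} (i j : Fin ℓ) :
    (sunGraph ℓ).Adj (.inr i) (.inr j) ↔ i ≠ j := by
  simp [sunGraph, SimpleGraph.fromRel_adj]

lemma cycle_adj {n : ℕ} (i j : Fin n) :
    (cycleG n).Adj i j ↔ i ≠ j ∧ (j.val = (i.val + 1) % n ∨ i.val = (j.val + 1) % n) := by
  simp [cycleG, SimpleGraph.fromRel_adj]

lemma inc_adj_lr (G : SimpleGraph V) (v : V) (Q : ↥(maxCliques G)) :
    (incidence G).Adj (.inl v) (.inr Q) ↔ v ∈ (Q : Set V) := by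
  simp [incidence, SimpleGraph.fromRel_adj]

lemma inc_adj_rl (G : SimpleGraph V) (v : V) (Q : ↥(maxCliques G)) :
    (incidence G).Adj (.inr Q) (.inl v) ↔ v ∈ (Q : Set V) := by
  simp [incidence, SimpleGraph.fromRel_adj]

lemma inc_adj_ll (G : SimpleGraph V) (v w : V) :
    ¬ (incidence G).Adj (.inl v) (.inl w) := by
  simp [incidence, SimpleGraph.fromRel_adj]

lemma inc_adj_rr (G : SimpleGraph V) (Q R : ↥(maxCliques G)) :
    ¬ (incidence G).Adj (.inr Q) (.inr R) := by
  simp [incidence, SimpleGraph.fromRel_adj]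

/-! ### Maximal cliques -/

lemma exists_maxClique (G : SimpleGraph V) [Finite V] {s : Set V} (hs : G.IsClique s) :
    ∃ Q ∈ maxCliques G, s ⊆ Q := by
  obtain ⟨Q, hQ, hmax⟩ := Set.Finite.exists_maximalFor id {t : Set V | G.IsClique t ∧ s ⊆ t}
    (Set.toFinite _) ⟨s, hs, subset_rfl⟩
  exact ⟨Q, ⟨hQ.1, fun R hR hQR => le_antisymm hQR (hmax ⟨hR, hQ.2.trans hQR⟩ hQR)⟩, hQ.2⟩

lemma edge_maxClique (G : SimpleGraph V) [Finite V] {a b : V} (h : G.Adj a b) :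
    ∃ Q ∈ maxCliques G, a ∈ Q ∧ b ∈ Q := by
  obtain ⟨Q, hQ, hsub⟩ := exists_maxClique G (s := {a, b}) (by
    intro x hx y hy hxy
    rcases hx with rfl | hx <;> rcases hy with rfl | hy <;>
      simp_all <;> first | exact h | exact h.symm)
  exact ⟨Q, hQ, hsub (by simp), hsub (by simp)⟩

lemma vertex_maxClique (G : SimpleGraph V) [Finite V] (a : V) :
    ∃ Q ∈ maxCliques G, a ∈ Q := by
  obtain ⟨Q, hQ, hsub⟩ := exists_maxClique G (s := {a}) (by simp)
  exact ⟨Q, hQ, hsub rfl⟩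

lemma mem_core {G : SimpleGraph V} {c : V} :
    c ∈ core G ↔ ∀ Q ∈ maxCliques G, c ∈ Q := Set.mem_sInter

lemma core_subset {G : SimpleGraph V} {Q : Set V} (hQ : Q ∈ maxCliques G) :
    core G ⊆ Q := fun _ hc => mem_core.mp hc Q hQ

lemma maxClique_insert {G : SimpleGraph V} {Q : Set V} (hQ : Q ∈ maxCliques G)
    {v : V} (h : ∀ x ∈ Q, x ≠ v → G.Adj v x) : v ∈ Q := by
  have hclique : G.IsClique (insert v Q) := by
    intro x hx y hy hxy
    rcases hx with rfl | hx <;> rcases hy with rfl | hy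
    · exact absurd rfl hxy
    · exact h y hy (Ne.symm hxy)
    · exact (h x hx hxy).symm
    · exact hQ.1 hx hy hxy
  have := hQ.2 _ hclique (Set.subset_insert _ _)
  rw [this]; exact Set.mem_insert _ _

/-- Build an induced sun from data. -/
lemma sun_of_data {ℓ : ℕ} (H : SimpleGraph V) (u w : Fin ℓ → V)
    (hu : Function.Injective u) (hw : Function.Injective w)
    (huw : ∀ i j, u i ≠ w j)
    (adj_uw : ∀ i j : Fin ℓ, H.Adj (u i) (w j) ↔ (j.val = i.val ∨ j.val = (i.val + 1) % ℓ))
    (adj_ww : ∀ i j : Fin ℓ, i ≠ j → H.Adj (w i) (w j))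
    (nadj_uu : ∀ i j, ¬ H.Adj (u i) (u j)) :
    InducedCopy (sunGraph ℓ) H := by
  refine ⟨⟨Sum.elim u w, ?_⟩, ?_⟩
  · rintro (i | i) (j | j) h <;> simp only [Sum.elim_inl, Sum.elim_inr] at h
    · rw [hu h]
    · exact absurd h (huw i j)
    · exact absurd h.symm (huw j i)
    · rw [hw h]
  · show ∀ a b, (sunGraph ℓ).Adj a b ↔ H.Adj (Sum.elim u w a) (Sum.elim u w b)
    rintro (i | i) (j | j) <;>
      simp only [Function.Embedding.coeFn_mk, Sum.elim_inl, Sum.elim_inr]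
    · constructor
      · intro h; exact absurd h (sun_adj_ll i j)
      · intro h; exact absurd h (nadj_uu i j)
    · rw [sun_adj_lr, adj_uw]
    · rw [sun_adj_rl]
      constructor
      · intro h; exact ((adj_uw j i).mpr h).symm
      · intro h; exact (adj_uw j i).mp h.symm
    · rw [sun_adj_rr]
      constructor
      · intro h; exact adj_ww i j h
      · intro h; rintro rfl; exact H.loopless.irrefl _ h

end Helpers

section Helly

variable {V : Type} [Finite V]

lemma helly_aux (H : SimpleGraph V) (C I : Set V)
    (hC : H.IsClique C) (hI : ∀ a ∈ I, ∀ b ∈ I, ¬ H.Adj a b) (hCI : Disjoint C I)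
    (hsf : ¬ InducedCopy (sunGraph 3) H) :
    ∀ (n : ℕ) (R : Set V), R.ncard ≤ n → R.Nonempty → R ⊆ I →
      (∀ v ∈ R, ∃ c ∈ C, H.Adj v c) →
      (∀ u ∈ R, ∀ v ∈ R, u ≠ v → ∃ c ∈ C, H.Adj u c ∧ H.Adj v c) →
      ∃ c ∈ C, ∀ v ∈ R, H.Adj v c := by
  intro n
  induction n with
  | zero =>
    intro R hcard hne _ _ _
    rw [Nat.le_zero, Set.ncard_eq_zero (Set.toFinite R)] at hcard
    exact absurd hcard hne.ne_empty
  | succ n ih =>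
    intro R hcard hne hRI hnbr hpair
    rcases le_or_gt R.ncard 2 with hsmall | hbig
    · -- small cases
      interval_cases h : R.ncard
      · rw [Set.ncard_eq_zero (Set.toFinite R)] at h
        exact absurd h hne.ne_empty
      · obtain ⟨v, rfl⟩ := Set.ncard_eq_one.mp h
        obtain ⟨c, hcC, hadj⟩ := hnbr v rfl
        exact ⟨c, hcC, fun x hx => by rw [hx]; exact hadj⟩
      · obtain ⟨u, v, huv, rfl⟩ := Set.ncard_eq_two.mp h
        obtain ⟨c, hcC, h1, h2⟩ := hpair u (by simp) v (by simp) huv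
        refine ⟨c, hcC, ?_⟩
        rintro x (rfl | rfl) <;> assumption
    · -- |R| ≥ 3
      by_contra hcon
      have key : ∀ v ∈ R, ∃ c ∈ C, (∀ x ∈ R, x ≠ v → H.Adj x c) ∧ ¬ H.Adj v c := by
        intro v hv
        have hcard' : (R \ {v}).ncard ≤ n := by
          have := Set.ncard_diff_singleton_lt_of_mem hv (Set.toFinite R)
          omega
        have hne' : (R \ {v}).Nonempty := by
          rw [← Set.ncard_pos (Set.toFinite _)]
          have heq : (R \ {v}).ncard = R.ncard - 1 :=
            Set.ncard_diff_singleton_of_mem hv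
          omega
        obtain ⟨c, hcC, hall⟩ := ih (R \ {v}) hcard' hne' (fun x hx => hRI hx.1)
          (fun x hx => hnbr x hx.1)
          (fun x hx y hy hxy => hpair x hx.1 y hy.1 hxy)
        refine ⟨c, hcC, fun x hx hxv => hall x ⟨hx, hxv⟩, ?_⟩
        intro hadj
        refine hcon ⟨c, hcC, ?_⟩
        intro x hx
        by_cases hxv : x = v
        · rw [hxv]; exact hadj
        · exact hall x ⟨hx, hxv⟩
      -- three distinct elements
      obtain ⟨a, ha⟩ := hne
      have h2 : (R \ {a}).Nonempty := by
        rw [← Set.ncard_pos (Set.toFinite _)]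
        have heq : (R \ {a}).ncard = R.ncard - 1 :=
          Set.ncard_diff_singleton_of_mem ha
        omega
      obtain ⟨b, hb⟩ := h2
      have h3 : ((R \ {a}) \ {b}).Nonempty := by
        rw [← Set.ncard_pos (Set.toFinite _)]
        have heq1 : (R \ {a}).ncard = R.ncard - 1 :=
          Set.ncard_diff_singleton_of_mem ha
        have heq2 : ((R \ {a}) \ {b}).ncard = (R \ {a}).ncard - 1 :=
          Set.ncard_diff_singleton_of_mem hb
        omega
      obtain ⟨d, hd⟩ := h3
      have haR : a ∈ R := ha
      have hbR : b ∈ R := hb.1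
      have hdR : d ∈ R := hd.1.1
      have hab : a ≠ b := fun h => hb.2 h.symm
      have had : a ≠ d := fun h => hd.1.2 h.symm
      have hbd : b ≠ d := fun h => hd.2 h.symm
      obtain ⟨ca, hcaC, hca_all, hca_not⟩ := key a haR
      obtain ⟨cb, hcbC, hcb_all, hcb_not⟩ := key b hbR
      obtain ⟨cd, hcdC, hcd_all, hcd_not⟩ := key d hdR
      have hcab : ca ≠ cb := fun h => hca_not (h ▸ hcb_all a haR hab)
      have hcad : ca ≠ cd := fun h => hca_not (h ▸ hcd_all a haR had)
      have hcbd : cb ≠ cd := fun h => hcb_not (h ▸ hcd_all b hbR hbd)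
      have hne_xc : ∀ x ∈ R, ∀ c ∈ C, x ≠ c := fun x hx c hc heq =>
        Set.disjoint_left.mp hCI hc (heq ▸ hRI hx)
      -- build the 3-sun : u = ![a,b,d], w = ![cb,cd,ca]
      refine hsf (sun_of_data H ![a, b, d] ![cb, cd, ca] ?_ ?_ ?_ ?_ ?_ ?_)
      · intro i j
        fin_cases i <;> fin_cases j <;> intro hij <;>
          first
            | rfl
            | exact absurd hij hab
            | exact absurd hij had
            | exact absurd hij hbd
            | exact absurd hij.symm hab
            | exact absurd hij.symm had
            | exact absurd hij.symm hbd
      · intro i j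
        fin_cases i <;> fin_cases j <;> intro hij <;>
          first
            | rfl
            | exact absurd hij hcab
            | exact absurd hij hcad
            | exact absurd hij hcbd
            | exact absurd hij.symm hcab
            | exact absurd hij.symm hcad
            | exact absurd hij.symm hcbd
      · intro i j
        fin_cases i <;> fin_cases j <;>
          first
            | exact hne_xc a haR cb hcbC | exact hne_xc a haR cd hcdC | exact hne_xc a haR ca hcaC
            | exact hne_xc b hbR cb hcbC | exact hne_xc b hbR cd hcdC | exact hne_xc b hbR ca hcaC
            | exact hne_xc d hdR cb hcbC | exact hne_xc d hdR cd hcdC | exact hne_xc d hdR ca hcaC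
      · intro i j
        fin_cases i <;> fin_cases j <;>
          first
            | exact iff_of_true (hcb_all a haR hab) (by decide)
            | exact iff_of_true (hcd_all a haR had) (by decide)
            | exact iff_of_true (hcd_all b hbR hbd) (by decide)
            | exact iff_of_true (hca_all b hbR hab.symm) (by decide)
            | exact iff_of_true (hcb_all d hdR hbd.symm) (by decide)
            | exact iff_of_true (hca_all d hdR had.symm) (by decide)
            | exact iff_of_false hca_not (by decide)
            | exact iff_of_false hcb_not (by decide)
            | exact iff_of_false hcd_not (by decide)
      · intro i j hij
        fin_cases i <;> fin_cases j <;>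
          first
            | exact absurd rfl hij
            | exact hC hcbC hcdC hcbd | exact hC hcbC hcaC hcab.symm
            | exact hC hcdC hcbC hcbd.symm | exact hC hcdC hcaC hcad.symm
            | exact hC hcaC hcbC hcab | exact hC hcaC hcdC hcad
      · intro i j
        fin_cases i <;> fin_cases j <;>
          first
            | exact hI a (hRI haR) a (hRI haR) | exact hI a (hRI haR) b (hRI hbR)
            | exact hI a (hRI haR) d (hRI hdR) | exact hI b (hRI hbR) a (hRI haR)
            | exact hI b (hRI hbR) b (hRI hbR) | exact hI b (hRI hbR) d (hRI hdR)
            | exact hI d (hRI hdR) a (hRI haR) | exact hI d (hRI hdR) b (hRI hbR)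
            | exact hI d (hRI hdR) d (hRI hdR)

lemma helly (H : SimpleGraph V) (C I : Set V)
    (hC : H.IsClique C) (hI : ∀ a ∈ I, ∀ b ∈ I, ¬ H.Adj a b) (hCI : Disjoint C I)
    (hsf : ¬ InducedCopy (sunGraph 3) H) (R : Set V) (hne : R.Nonempty) (hRI : R ⊆ I)
    (hnbr : ∀ v ∈ R, ∃ c ∈ C, H.Adj v c)
    (hpair : ∀ u ∈ R, ∀ v ∈ R, u ≠ v → ∃ c ∈ C, H.Adj u c ∧ H.Adj v c) :
    ∃ c ∈ C, ∀ v ∈ R, H.Adj v c :=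
  helly_aux H C I hC hI hCI hsf R.ncard R le_rfl hne hRI hnbr hpair

end Helly

section Forward

variable {V : Type} [Finite V]

lemma mod_helper {k a : ℕ} (hk : 3 ≤ k) (ha : a < k) :
    (a + 1) % k ≠ a ∧ ((a + 1) % k + 1) % k ≠ a := by
  rcases Nat.lt_or_ge (a + 1) k with h | h
  · have e1 : (a + 1) % k = a + 1 := Nat.mod_eq_of_lt h
    rw [e1]
    refine ⟨by omega, ?_⟩
    rcases Nat.lt_or_ge (a + 2) k with h2 | h2
    · rw [Nat.mod_eq_of_lt (by omega : a + 1 + 1 < k)]; omega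
    · have e2 : a + 1 + 1 = k := by omega
      rw [e2, Nat.mod_self]; omega
  · have e1 : a + 1 = k := by omega
    rw [e1, Nat.mod_self]
    rw [Nat.zero_add, Nat.mod_eq_of_lt (by omega : 1 < k)]
    omega

lemma mod_inj {k a b : ℕ} (ha : a < k) (hb : b < k) (h : (a + 1) % k = (b + 1) % k) :
    a = b := by
  rcases Nat.lt_or_ge (a + 1) k with h1 | h1 <;> rcases Nat.lt_or_ge (b + 1) k with h2 | h2
  · rw [Nat.mod_eq_of_lt h1, Nat.mod_eq_of_lt h2] at h; omega
  · have e2 : b + 1 = k := by omega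
    rw [Nat.mod_eq_of_lt h1, e2, Nat.mod_self] at h; omega
  · have e1 : a + 1 = k := by omega
    rw [e1, Nat.mod_self, Nat.mod_eq_of_lt h2] at h; omega
  · omega

variable {H : SimpleGraph V} {C I : Set V}

lemma mem_I_of_not_C (hsp : IsSplitPart H C I) {v : V} (hv : v ∉ C) : v ∈ I := by
  have h : v ∈ C ∪ I := hsp.1.symm ▸ Set.mem_univ v
  rcases h with h | h
  · exact absurd h hv
  · exact h

lemma nbr_of_I (hsp : IsSplitPart H C I) {u w : V} (hu : u ∈ I) (h : H.Adj u w) : w ∈ C := by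
  by_contra hw
  exact hsp.2.2.2 u hu w (mem_I_of_not_C hsp hw) h

lemma univC (hsp : IsSplitPart H C I) (hN : ∀ u ∈ I, ∃ c ∈ C, H.Adj u c)
    {c : V} (hc : c ∈ C) {v : V} (hv : v ≠ c) : (Gsq H).Adj c v := by
  refine ⟨hv.symm, ?_⟩
  by_cases hvC : v ∈ C
  · exact Or.inl (hsp.2.2.1 hc hvC hv.symm)
  · obtain ⟨c', hc', hadj⟩ := hN v (mem_I_of_not_C hsp hvC)
    by_cases hcc : c' = c
    · exact Or.inl (hcc ▸ hadj).symm
    · exact Or.inr ⟨c', hsp.2.2.1 hc hc' (Ne.symm hcc), hadj.symm⟩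

lemma C_subset_core (hsp : IsSplitPart H C I) (hN : ∀ u ∈ I, ∃ c ∈ C, H.Adj u c) :
    C ⊆ core (Gsq H) := by
  intro c hc
  rw [mem_core]
  intro Q hQ
  exact maxClique_insert hQ (fun x hx hxc => univC hsp hN hc hxc)

/-- Any `Gsq H`-clique inside `I` has a common `H`-neighbour in `C`. -/
lemma helly_clique (hsp : IsSplitPart H C I) (hsf : ¬ InducedCopy (sunGraph 3) H)
    (hN : ∀ u ∈ I, ∃ c ∈ C, H.Adj u c) {R : Set V} (hRI : R ⊆ I) (hne : R.Nonempty)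
    (hcl : (Gsq H).IsClique R) : ∃ c ∈ C, ∀ v ∈ R, H.Adj v c := by
  refine helly H C I hsp.2.2.1 hsp.2.2.2 hsp.2.1 hsf R hne hRI (fun v hv => hN v (hRI hv)) ?_
  intro u hu v hv huv
  obtain ⟨-, h | ⟨w, hw1, hw2⟩⟩ := hcl hu hv huv
  · exact absurd h (hsp.2.2.2 u (hRI hu) v (hRI hv))
  · exact ⟨w, nbr_of_I hsp (hRI hu) hw1, hw1, hw2.symm⟩

lemma fwd_ineq (hsp : IsSplitPart H C I) (hsf : ¬ InducedCopy (sunGraph 3) H)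
    (hN : ∀ u ∈ I, ∃ c ∈ C, H.Adj u c) (hCne : C.Nonempty) :
    cliqueIneq (Gsq H) := by
  classical
  have hkey : ∀ Q : Set V, Q ∈ maxCliques (Gsq H) → ∃ c, c ∈ C ∧ ∀ v ∈ Q ∩ I, H.Adj v c := by
    intro Q hQ
    by_cases hne : (Q ∩ I).Nonempty
    · obtain ⟨c, hc, hall⟩ := helly_clique hsp hsf hN Set.inter_subset_right hne
        (hQ.1.subset Set.inter_subset_left)
      exact ⟨c, hc, hall⟩
    · exact ⟨hCne.choose, hCne.choose_spec, fun v hv => absurd ⟨v, hv⟩ hne⟩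
  set ψ : Set V → V := fun Q => if h : Q ∈ maxCliques (Gsq H) then (hkey Q h).choose
    else hCne.choose with hψ
  have hψC : ∀ Q ∈ maxCliques (Gsq H), ψ Q ∈ C := by
    intro Q hQ; rw [hψ]; simp only [hQ, dif_pos]; exact (hkey Q hQ).choose_spec.1
  have hψadj : ∀ Q (hQ : Q ∈ maxCliques (Gsq H)), ∀ v ∈ Q ∩ I, H.Adj v (ψ Q) := by
    intro Q hQ; rw [hψ]; simp only [hQ, dif_pos]; exact (hkey Q hQ).choose_spec.2
  refine Set.ncard_le_ncard_of_injOn ψ (fun Q hQ => C_subset_core hsp hN (hψC Q hQ)) ?_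
    (Set.toFinite _)
  intro Q1 hQ1 Q2 hQ2 heq
  have hclique : (Gsq H).IsClique (Q1 ∪ Q2) := by
    intro x hx y hy hxy
    by_cases hxC : x ∈ C
    · exact univC hsp hN hxC (Ne.symm hxy)
    · by_cases hyC : y ∈ C
      · exact (univC hsp hN hyC hxy).symm
      · have hxI : x ∈ I := mem_I_of_not_C hsp hxC
        have hyI : y ∈ I := mem_I_of_not_C hsp hyC
        have hx' : H.Adj x (ψ Q1) := by
          rcases hx with hx | hx
          · exact hψadj Q1 hQ1 x ⟨hx, hxI⟩
          · exact heq ▸ hψadj Q2 hQ2 x ⟨hx, hxI⟩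
        have hy' : H.Adj y (ψ Q1) := by
          rcases hy with hy | hy
          · exact hψadj Q1 hQ1 y ⟨hy, hyI⟩
          · exact heq ▸ hψadj Q2 hQ2 y ⟨hy, hyI⟩
        exact ⟨hxy, Or.inr ⟨ψ Q1, hx', hy'.symm⟩⟩
  have e1 : Q1 = Q1 ∪ Q2 := hQ1.2 _ hclique Set.subset_union_left
  have e2 : Q2 = Q1 ∪ Q2 := hQ2.2 _ hclique Set.subset_union_right
  exact e1.trans e2.symm

end Forward

section ForwardBalanced

variable {V : Type} [Finite V]

lemma fin_val_add_one {n : ℕ} [NeZero n] (a : Fin n) : (a + 1).val = (a.val + 1) % n := by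
  rw [Fin.val_add, Fin.val_one', Nat.add_mod_mod]

lemma fin_eq_add_one_iff {n : ℕ} [NeZero n] (a b : Fin n) :
    b = a + 1 ↔ b.val = (a.val + 1) % n := by
  rw [Fin.ext_iff, fin_val_add_one]

lemma cycle_adj_fin {n : ℕ} [NeZero n] (i j : Fin n) :
    (cycleG n).Adj i j ↔ i ≠ j ∧ (j = i + 1 ∨ i = j + 1) := by
  rw [cycle_adj, ← fin_eq_add_one_iff, ← fin_eq_add_one_iff]

lemma cycle_rotate {n : ℕ} [NeZero n] (a b t : Fin n) :
    (cycleG n).Adj (a + t) (b + t) ↔ (cycleG n).Adj a b := by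
  rw [cycle_adj_fin, cycle_adj_fin]
  have hne : a + t = b + t ↔ a = b :=
    ⟨fun h => add_right_cancel h, fun h => by rw [h]⟩
  have h1 : b + t = (a + t) + 1 ↔ b = a + 1 := by
    rw [add_right_comm a t 1]
    exact ⟨fun h => add_right_cancel h, fun h => by rw [h]⟩
  have h2 : a + t = (b + t) + 1 ↔ a = b + 1 := by
    rw [add_right_comm b t 1]
    exact ⟨fun h => add_right_cancel h, fun h => by rw [h]⟩
  rw [h1, h2, ne_eq, hne, ne_eq]

variable {H : SimpleGraph V} {C I : Set V}

lemma fwd_balanced (hsp : IsSplitPart H C I) (hosf : OddSunFree H)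
    (hN : ∀ u ∈ I, ∃ c ∈ C, H.Adj u c) : BalancedGraph (Gsq H) := by
  classical
  intro k hk hodd hcopy
  haveI : NeZero k := ⟨by omega⟩
  haveI : NeZero (2 * k) := ⟨by omega⟩
  have hsf : ¬ InducedCopy (sunGraph 3) H := hosf 3 le_rfl (by decide)
  suffices main : ∀ f : Fin (2*k) ↪ (V ⊕ ↥(maxCliques (Gsq H))),
      (∀ a b, (cycleG (2*k)).Adj a b ↔ (incidence (Gsq H)).Adj (f a) (f b)) →
      (∃ v, f 0 = Sum.inl v) → False by
    obtain ⟨f, hf⟩ := hcopy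
    rcases h0 : f 0 with v | Q
    · exact main f hf ⟨v, h0⟩
    · have hadj01 : (cycleG (2*k)).Adj 0 1 := by
        rw [cycle_adj_fin]
        refine ⟨fun h => ?_, Or.inl (zero_add 1).symm⟩
        have h2 := congrArg Fin.val h
        rw [Fin.val_zero, Fin.val_one', Nat.mod_eq_of_lt (by omega)] at h2
        omega
      have hinc := (hf 0 1).mp hadj01
      rcases h1 : f 1 with v | Q'
      · -- rotate by 1
        refine main ⟨fun a => f (a + 1), fun a b hab => ?_⟩ ?_ ⟨v, by show f (0 + 1) = _; simpa using h1⟩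
        · have := f.injective hab
          exact add_right_cancel this
        · intro a b
          rw [← cycle_rotate a b 1]
          exact hf (a + 1) (b + 1)
      · rw [h0, h1] at hinc
        exact absurd hinc (inc_adj_rr _ _ _)
  intro f hf ⟨v0, h0⟩
  have cyc_succ : ∀ (m : ℕ) (h : m + 1 < 2*k), (cycleG (2*k)).Adj ⟨m, by omega⟩ ⟨m+1, h⟩ := by
    intro m h
    rw [cycle_adj]
    refine ⟨fun hh => ?_, Or.inl ?_⟩
    · have h2 := congrArg Fin.val hh
      simp only [] at h2
      omega
    · exact (Nat.mod_eq_of_lt h).symm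
  -- parity of the cycle
  have alt : ∀ (m : ℕ) (hm : m < 2*k),
      (Even m → ∃ v, f ⟨m, hm⟩ = Sum.inl v) ∧ (¬ Even m → ∃ Q, f ⟨m, hm⟩ = Sum.inr Q) := by
    intro m
    induction m with
    | zero =>
      intro hm
      have e0 : (⟨0, hm⟩ : Fin (2*k)) = 0 := by rw [Fin.ext_iff]; simp
      exact ⟨fun _ => ⟨v0, by rw [e0, h0]⟩, fun h => absurd Even.zero h⟩
    | succ m ih =>
      intro hm
      have hm' : m < 2*k := by omega
      have hadj := (hf ⟨m, hm'⟩ ⟨m+1, hm⟩).mp (cyc_succ m hm)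
      constructor
      · intro hev
        have hodd' : ¬ Even m := by rw [Nat.even_add_one] at hev; exact hev
        obtain ⟨Q, hQ⟩ := (ih hm').2 hodd'
        rw [hQ] at hadj
        rcases hfm : f ⟨m+1, hm⟩ with v | Q'
        · exact ⟨v, rfl⟩
        · rw [hfm] at hadj; exact absurd hadj (inc_adj_rr _ _ _)
      · intro hodd''
        have hev' : Even m := by rw [Nat.even_add_one] at hodd''; simpa using hodd''
        obtain ⟨v, hv⟩ := (ih hm').1 hev'
        rw [hv] at hadj
        rcases hfm : f ⟨m+1, hm⟩ with v' | Q'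
        · rw [hfm] at hadj; exact absurd hadj (inc_adj_ll _ _ _)
        · exact ⟨Q', rfl⟩
  have hlt1 : ∀ i : Fin k, 2 * i.val < 2 * k := fun i => by have := i.isLt; omega
  have hlt2 : ∀ i : Fin k, 2 * i.val + 1 < 2 * k := fun i => by have := i.isLt; omega
  have hvvspec : ∀ i : Fin k, ∃ v, f ⟨2 * i.val, hlt1 i⟩ = Sum.inl v :=
    fun i => (alt _ (hlt1 i)).1 ⟨i.val, by ring⟩
  have hQQspec : ∀ i : Fin k, ∃ Q, f ⟨2 * i.val + 1, hlt2 i⟩ = Sum.inr Q :=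
    fun i => (alt _ (hlt2 i)).2 (by simp [Nat.even_add_one, parity_simps])
  choose vv hvv using hvvspec
  choose QQ hQQ using hQQspec
  -- membership characterization
  have mem_iff : ∀ i j : Fin k, vv i ∈ (QQ j : Set V) ↔
      (i.val = j.val ∨ i.val = (j.val + 1) % k) := by
    intro i j
    have h1 : vv i ∈ (QQ j : Set V) ↔
        (incidence (Gsq H)).Adj (Sum.inl (vv i)) (Sum.inr (QQ j)) :=
      (inc_adj_lr _ _ _).symm
    rw [h1, ← hvv i, ← hQQ j, ← hf, cycle_adj]
    have e1 : (2 * i.val + 1) % (2 * k) = 2 * i.val + 1 :=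
      Nat.mod_eq_of_lt (by have := i.isLt; omega)
    have e2 : (2 * j.val + 1 + 1) % (2 * k) = 2 * ((j.val + 1) % k) := by
      rw [show 2 * j.val + 1 + 1 = 2 * (j.val + 1) by ring, Nat.mul_mod_mul_left]
    have e3 : (j.val + 1) % k < k := Nat.mod_lt _ (by omega)
    simp only [Fin.ext_iff, ne_eq]
    rw [e1, e2]
    set m := (j.val + 1) % k with hm
    constructor
    · rintro ⟨hne, h | h⟩ <;> omega
    · intro h
      exact ⟨by omega, by omega⟩
  -- the vv's avoid C
  have vvI : ∀ i : Fin k, vv i ∈ I := by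
    intro i
    by_contra hvC
    have hvC' : vv i ∈ C := by
      have h : vv i ∈ C ∪ I := hsp.1.symm ▸ Set.mem_univ _
      rcases h with h | h
      · exact h
      · exact absurd h hvC
    have e3 : (i.val + 1) % k < k := Nat.mod_lt _ (by omega)
    have hmem : vv i ∈ (QQ ⟨(i.val + 1) % k, e3⟩ : Set V) :=
      core_subset (QQ _).2 (C_subset_core hsp hN hvC')
    rw [mem_iff] at hmem
    rcases hmem with h | h
    · exact (mod_helper hk i.isLt).1 h.symm
    · exact (mod_helper hk i.isLt).2 h.symm
  -- common neighbours of the cliques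
  have hccspec : ∀ j : Fin k, ∃ c, c ∈ C ∧ ∀ v ∈ (QQ j : Set V) ∩ I, H.Adj v c := by
    intro j
    obtain ⟨c, hc, hall⟩ := helly_clique hsp hsf hN (R := (QQ j : Set V) ∩ I)
      Set.inter_subset_right ⟨vv j, (mem_iff j j).mpr (Or.inl rfl), vvI j⟩
      ((QQ j).2.1.subset Set.inter_subset_left)
    exact ⟨c, hc, hall⟩
  choose cc hccC hccadj using hccspec
  have adj_iff : ∀ i j : Fin k, H.Adj (vv i) (cc j) ↔
      (i.val = j.val ∨ i.val = (j.val + 1) % k) := by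
    intro i j
    constructor
    · intro hadj
      rw [← mem_iff]
      refine maxClique_insert (QQ j).2 ?_
      intro x hx hxne
      by_cases hxC : x ∈ C
      · exact (univC hsp hN hxC hxne.symm).symm
      · have hxI : x ∈ I := mem_I_of_not_C hsp hxC
        have h2 : H.Adj x (cc j) := hccadj j x ⟨hx, hxI⟩
        exact ⟨hxne.symm, Or.inr ⟨cc j, hadj, h2.symm⟩⟩
    · intro h
      exact hccadj j (vv i) ⟨(mem_iff i j).mpr h, vvI i⟩
  have cc_inj : Function.Injective cc := by
    intro j j' he
    have h1 : H.Adj (vv j) (cc j') := he ▸ (adj_iff j j).mpr (Or.inl rfl)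
    have h1' := (adj_iff j j').mp h1
    rcases h1' with h | h
    · exact Fin.ext h
    · have e3 : (j.val + 1) % k < k := Nat.mod_lt _ (by omega)
      have h2 : H.Adj (vv ⟨(j.val + 1) % k, e3⟩) (cc j') :=
        he ▸ (adj_iff ⟨(j.val + 1) % k, e3⟩ j).mpr (Or.inr rfl)
      have h2' := (adj_iff _ j').mp h2
      rcases h2' with h2a | h2a
      · exfalso
        have h2b : (j.val + 1) % k = j'.val := h2a
        refine (mod_helper hk j.isLt).2 ?_
        rw [← h2b] at h
        exact h.symm
      · have h2b : (j.val + 1) % k = (j'.val + 1) % k := h2a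
        exact Fin.ext (mod_inj j.isLt j'.isLt h2b)
  have vv_inj : Function.Injective vv := by
    intro i i' he
    have : f ⟨2 * i.val, hlt1 i⟩ = f ⟨2 * i'.val, hlt1 i'⟩ := by
      rw [hvv i, hvv i', he]
    have h2 := congrArg Fin.val (f.injective this)
    have h3 : 2 * i.val = 2 * i'.val := h2
    exact Fin.ext (by omega)
  -- build the odd sun
  refine hosf k hk hodd (sun_of_data H vv (fun j => cc (j - 1)) vv_inj ?_ ?_ ?_ ?_ ?_)
  · intro j j' he
    have he2 : cc (j - 1) = cc (j' - 1) := he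
    have h2 := congrArg (· + 1) (cc_inj he2)
    simpa using h2
  · intro i j
    intro he
    have he2 : vv i = cc (j - 1) := he
    have hI' : cc (j - 1) ∈ I := he2 ▸ vvI i
    exact Set.disjoint_left.mp hsp.2.1 (hccC (j - 1)) hI'
  · intro i j
    show H.Adj (vv i) (cc (j - 1)) ↔ (j.val = i.val ∨ j.val = (i.val + 1) % k)
    rw [adj_iff i (j - 1)]
    have e : ((j - 1).val + 1) % k = j.val := by
      rw [← fin_val_add_one (j - 1), sub_add_cancel]
    have d1 : i.val = (j - 1).val ↔ j.val = (i.val + 1) % k := by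
      rw [← fin_val_add_one i, ← Fin.ext_iff, ← Fin.ext_iff]
      constructor
      · intro h; rw [h]
        exact (sub_add_cancel j 1).symm
      · intro h; rw [h]
        exact (add_sub_cancel_right i 1).symm
    constructor
    · rintro (h | h)
      · exact Or.inr (d1.mp h)
      · exact Or.inl (h.trans e).symm
    · rintro (h | h)
      · exact Or.inr (e.trans h).symm
      · exact Or.inl (d1.mpr h)
  · intro i j hij
    show H.Adj (cc (i - 1)) (cc (j - 1))
    refine hsp.2.2.1 (hccC _) (hccC _) ?_
    intro he
    refine hij ?_
    have h2 := congrArg (· + 1) (cc_inj he)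
    simpa using h2
  · intro i j
    exact hsp.2.2.2 _ (vvI i) _ (vvI j)

end ForwardBalanced

section Reverse

variable {V : Type} [Finite V]

lemma cliqueIneq_nonempty (G : SimpleGraph V) (h : cliqueIneq G) : Nonempty V := by
  by_contra hne
  rw [not_nonempty_iff] at hne
  have hmax : maxCliques G = {∅} := by
    ext Q
    simp only [maxCliques, Set.mem_setOf_eq, Set.mem_singleton_iff]
    constructor
    · rintro ⟨-, -⟩; exact Set.eq_empty_of_isEmpty Q
    · rintro rfl
      exact ⟨by simp [SimpleGraph.IsClique, Set.pairwise_empty],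
        fun R _ _ => (Set.eq_empty_of_isEmpty R).symm⟩
  rw [cliqueIneq, hmax] at h
  rw [Set.ncard_singleton, core, hmax, Set.sInter_singleton, Set.ncard_empty] at h
  omega

lemma reverse_dir (G : SimpleGraph V) (hbal : BalancedGraph G) (hineq : cliqueIneq G) :
    ∃ H : SimpleGraph V, IsSplit H ∧ OddSunFree H ∧ H.Connected ∧ Gsq H = G := by
  classical
  have hV : Nonempty V := cliqueIneq_nonempty G hineq
  haveI : Fintype ↥(maxCliques G) := Fintype.ofFinite _
  haveI : Fintype ↥(core G) := Fintype.ofFinite _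
  have hcard : Fintype.card ↥(maxCliques G) ≤ Fintype.card ↥(core G) := by
    rw [← Nat.card_eq_fintype_card, ← Nat.card_eq_fintype_card,
      Nat.card_coe_set_eq, Nat.card_coe_set_eq]
    exact hineq
  obtain ⟨φ⟩ := Function.Embedding.nonempty_of_card_le hcard
  set H : SimpleGraph V := SimpleGraph.fromRel (fun a b =>
    (a ∈ core G ∧ b ∈ core G) ∨
    (a ∉ core G ∧ ∃ Q : ↥(maxCliques G), a ∈ (Q : Set V) ∧ b = ↑(φ Q))) with hH
  have hφcore : ∀ Q, ↑(φ Q) ∈ core G := fun Q => (φ Q).2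
  have edgeC : ∀ a ∈ core G, ∀ b ∈ core G, a ≠ b → H.Adj a b := by
    intro a ha b hb hab
    rw [hH, SimpleGraph.fromRel_adj]
    exact ⟨hab, Or.inl (Or.inl ⟨ha, hb⟩)⟩
  have edgeQ : ∀ (Q : ↥(maxCliques G)) (a : V), a ∈ (Q : Set V) → a ∉ core G →
      H.Adj a ↑(φ Q) := by
    intro Q a haQ haC
    rw [hH, SimpleGraph.fromRel_adj]
    exact ⟨fun h => haC (h ▸ hφcore Q), Or.inl (Or.inr ⟨haC, Q, haQ, rfl⟩)⟩
  have nbr_struct : ∀ a b : V, a ∉ core G → H.Adj a b →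
      b ∈ core G ∧ ∃ Q : ↥(maxCliques G), a ∈ (Q : Set V) ∧ b = ↑(φ Q) := by
    intro a b haC hadj
    rw [hH, SimpleGraph.fromRel_adj] at hadj
    obtain ⟨hne, h | h⟩ := hadj
    · rcases h with ⟨ha, -⟩ | ⟨-, Q, haQ, rfl⟩
      · exact absurd ha haC
      · exact ⟨hφcore Q, Q, haQ, rfl⟩
    · rcases h with ⟨-, ha⟩ | ⟨-, Q, -, ha⟩
      · exact absurd ha haC
      · exact absurd (ha ▸ hφcore Q) haC
  have indepI : ∀ a ∉ core G, ∀ b ∉ core G, ¬ H.Adj a b := by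
    intro a ha b hb hadj
    exact hb (nbr_struct a b ha hadj).1
  have hsplit : IsSplitPart H (core G) (core G)ᶜ := by
    refine ⟨Set.union_compl_self _, disjoint_compl_right, ?_, ?_⟩
    · intro a ha b hb hab
      exact edgeC a ha b hb hab
    · intro a ha b hb
      exact indepI a ha b hb
  have adjG_of_mem : ∀ (Q : Set V), Q ∈ maxCliques G → ∀ a ∈ Q, ∀ b ∈ Q, a ≠ b → G.Adj a b :=
    fun Q hQ a ha b hb hab => hQ.1 ha hb hab
  have adjG_core : ∀ a b : V, a ≠ b → (a ∈ core G ∨ b ∈ core G) → G.Adj a b := by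
    intro a b hab h
    rcases h with h | h
    · obtain ⟨Q, hQ, hbQ⟩ := vertex_maxClique G b
      exact adjG_of_mem Q hQ a (core_subset hQ h) b hbQ hab
    · obtain ⟨Q, hQ, haQ⟩ := vertex_maxClique G a
      exact adjG_of_mem Q hQ a haQ b (core_subset hQ h) hab
  have edge_G : ∀ a b : V, H.Adj a b → G.Adj a b := by
    intro a b hadj
    by_cases haC : a ∈ core G
    · by_cases hbC : b ∈ core G
      · exact adjG_core a b hadj.ne (Or.inl haC)
      · obtain ⟨-, Q, hbQ, -⟩ := nbr_struct b a hbC hadj.symm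
        exact (adjG_of_mem Q Q.2 b hbQ a (core_subset Q.2 haC) hadj.ne.symm).symm
    · obtain ⟨hbC, Q, haQ, -⟩ := nbr_struct a b haC hadj
      exact adjG_of_mem Q Q.2 a haQ b (core_subset Q.2 hbC) hadj.ne
  have hGsq : Gsq H = G := by
    ext a b
    constructor
    · rintro ⟨hne, hadj | ⟨w, h1, h2⟩⟩
      · exact edge_G a b hadj
      · by_cases haC : a ∈ core G
        · exact adjG_core a b hne (Or.inl haC)
        · by_cases hbC : b ∈ core G
          · exact adjG_core a b hne (Or.inr hbC)
          · obtain ⟨-, Qa, haQ, hwa⟩ := nbr_struct a w haC h1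
            obtain ⟨-, Qb, hbQ, hwb⟩ := nbr_struct b w hbC h2.symm
            have hQab : Qa = Qb := φ.injective (Subtype.coe_injective (hwa.symm.trans hwb))
            exact adjG_of_mem Qa Qa.2 a haQ b (hQab ▸ hbQ) hne
    · intro hG
      obtain ⟨Q, hQ, haQ, hbQ⟩ := edge_maxClique G hG
      refine ⟨hG.ne, ?_⟩
      by_cases haC : a ∈ core G
      · by_cases hbC : b ∈ core G
        · exact Or.inl (edgeC a haC b hbC hG.ne)
        · have hb' : H.Adj b ↑(φ ⟨Q, hQ⟩) := edgeQ ⟨Q, hQ⟩ b hbQ hbC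
          by_cases haw : a = ↑(φ ⟨Q, hQ⟩)
          · exact Or.inl (haw ▸ hb'.symm)
          · exact Or.inr ⟨↑(φ ⟨Q, hQ⟩), edgeC a haC _ (hφcore _) haw, hb'.symm⟩
      · have ha' : H.Adj a ↑(φ ⟨Q, hQ⟩) := edgeQ ⟨Q, hQ⟩ a haQ haC
        by_cases hbC : b ∈ core G
        · by_cases hbw : b = ↑(φ ⟨Q, hQ⟩)
          · exact Or.inl (hbw ▸ ha')
          · exact Or.inr ⟨↑(φ ⟨Q, hQ⟩), ha', edgeC _ (hφcore _) b hbC (Ne.symm hbw)⟩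
        · exact Or.inr ⟨↑(φ ⟨Q, hQ⟩), ha', (edgeQ ⟨Q, hQ⟩ b hbQ hbC).symm⟩
  have hconn : H.Connected := by
    have hreach : ∀ a : V, ∃ c, c ∈ core G ∧ H.Reachable a c := by
      intro a
      by_cases haC : a ∈ core G
      · exact ⟨a, haC, SimpleGraph.Reachable.refl a⟩
      · obtain ⟨Q, hQ, haQ⟩ := vertex_maxClique G a
        exact ⟨↑(φ ⟨Q, hQ⟩), hφcore _, (edgeQ ⟨Q, hQ⟩ a haQ haC).reachable⟩
    rw [SimpleGraph.connected_iff]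
    refine ⟨?_, hV⟩
    intro a b
    obtain ⟨c, hc, hac⟩ := hreach a
    obtain ⟨c', hc', hbc'⟩ := hreach b
    refine hac.trans (SimpleGraph.Reachable.trans ?_ hbc'.symm)
    by_cases hcc : c = c'
    · rw [hcc]
    · exact (edgeC c hc c' hc' hcc).reachable
  have hosf : OddSunFree H := by
    intro ℓ hl hlodd hcopy
    haveI : NeZero ℓ := ⟨by omega⟩
    obtain ⟨f, hf⟩ := hcopy
    set u : Fin ℓ → V := fun i => f (Sum.inl i) with hu
    set w : Fin ℓ → V := fun j => f (Sum.inr j) with hw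
    have huw_adj : ∀ i j : Fin ℓ, H.Adj (u i) (w j) ↔
        (j.val = i.val ∨ j.val = (i.val + 1) % ℓ) := by
      intro i j
      rw [← sun_adj_lr i j, hf (Sum.inl i) (Sum.inr j)]
    have hnadj_uu : ∀ i j : Fin ℓ, ¬ H.Adj (u i) (u j) := by
      intro i j h
      exact sun_adj_ll i j ((hf (Sum.inl i) (Sum.inl j)).mpr h)
    have hadj_ww : ∀ i j : Fin ℓ, i ≠ j → H.Adj (w i) (w j) := by
      intro i j hij
      exact (hf (Sum.inr i) (Sum.inr j)).mp ((sun_adj_rr i j).mpr hij)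
    have u_inj : ∀ i j : Fin ℓ, u i = u j → i = j := by
      intro i j h
      exact Sum.inl_injective (f.injective h)
    have uw_ne : ∀ i j : Fin ℓ, u i ≠ w j := by
      intro i j h
      exact Sum.inl_ne_inr (f.injective h)
    have w_inj : ∀ i j : Fin ℓ, w i = w j → i = j := by
      intro i j h
      exact Sum.inr_injective (f.injective h)
    have hu_not_core : ∀ i : Fin ℓ, u i ∉ core G := by
      intro i hic
      have h1ne : (i + 1 : Fin ℓ) ≠ i := by
        intro h
        have h2 := congrArg Fin.val h
        rw [fin_val_add_one] at h2
        exact (mod_helper hl i.isLt).1 h2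
      have hu1 : u (i + 1) ∉ core G := by
        intro h
        exact hnadj_uu i (i + 1)
          (edgeC _ hic _ h (fun he => h1ne (u_inj i (i + 1) he).symm))
      have hw2 : w (i + 1 + 1) ∉ core G := by
        intro hwc
        have hadj : H.Adj (u i) (w (i + 1 + 1)) := edgeC _ hic _ hwc (uw_ne _ _)
        have hcond := (huw_adj i (i + 1 + 1)).mp hadj
        have e1 : (i + 1 + 1 : Fin ℓ).val = ((i.val + 1) % ℓ + 1) % ℓ := by
          rw [fin_val_add_one, fin_val_add_one]
        rw [e1] at hcond
        rcases hcond with h | h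
        · exact (mod_helper hl i.isLt).2 h
        · exact (mod_helper hl (Nat.mod_lt _ (by omega) : (i.val + 1) % ℓ < ℓ)).1 h
      have hadj12 : H.Adj (u (i + 1)) (w (i + 1 + 1)) := by
        refine (huw_adj _ _).mpr (Or.inr ?_)
        exact fin_val_add_one (i + 1)
      exact hw2 (nbr_struct _ _ hu1 hadj12).1
    have hQspec : ∀ j : Fin ℓ, ∃ Q : ↥(maxCliques G), u j ∈ (Q : Set V) ∧ w j = ↑(φ Q) := by
      intro j
      have hadj : H.Adj (u j) (w j) := (huw_adj j j).mpr (Or.inl rfl)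
      exact (nbr_struct _ _ (hu_not_core j) hadj).2
    choose QQ hQmem hQeq using hQspec
    have step3 : ∀ i j : Fin ℓ, u i ∈ (QQ j : Set V) ↔
        (j.val = i.val ∨ j.val = (i.val + 1) % ℓ) := by
      intro i j
      constructor
      · intro hmem
        have hadj : H.Adj (u i) ↑(φ (QQ j)) := edgeQ (QQ j) (u i) hmem (hu_not_core i)
        rw [← hQeq j] at hadj
        exact (huw_adj i j).mp hadj
      · intro hcond
        have hadj : H.Adj (u i) (w j) := (huw_adj i j).mpr hcond
        obtain ⟨-, Q', hmem', heq'⟩ := nbr_struct _ _ (hu_not_core i) hadj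
        have hQ' : Q' = QQ j := φ.injective (Subtype.coe_injective (heq'.symm.trans (hQeq j)))
        exact hQ' ▸ hmem'
    have QQ_inj : ∀ j j' : Fin ℓ, QQ j = QQ j' → j = j' := by
      intro j j' h
      refine w_inj _ _ ((hQeq j).trans ?_)
      rw [h, ← hQeq j']
    have step3' : ∀ (x y : ℕ) (hx : x < ℓ) (hy : y < ℓ),
        (u ⟨x, hx⟩ ∈ (QQ ⟨y, hy⟩ : Set V)) ↔ (y = x ∨ y = (x + 1) % ℓ) :=
      fun x y hx hy => step3 ⟨x, hx⟩ ⟨y, hy⟩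
    have hdiv : ∀ p : Fin (2 * ℓ), p.val / 2 < ℓ := fun p => by have := p.isLt; omega
    have hmlt : ∀ p : Fin (2 * ℓ), (p.val / 2 + 1) % ℓ < ℓ := fun p => Nat.mod_lt _ (by omega)
    set g : Fin (2 * ℓ) → (V ⊕ ↥(maxCliques G)) := fun p =>
      if hp : p.val % 2 = 0 then Sum.inl (u ⟨p.val / 2, hdiv p⟩)
      else Sum.inr (QQ ⟨(p.val / 2 + 1) % ℓ, hmlt p⟩) with hg
    have hgE : ∀ (p : Fin (2*ℓ)) (hp : p.val % 2 = 0),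
        g p = Sum.inl (u ⟨p.val / 2, hdiv p⟩) := fun p hp => dif_pos hp
    have hgO : ∀ (p : Fin (2*ℓ)) (hp : ¬ p.val % 2 = 0),
        g p = Sum.inr (QQ ⟨(p.val / 2 + 1) % ℓ, hmlt p⟩) := fun p hp => dif_neg hp
    have ginj : Function.Injective g := by
      intro p q hpq
      by_cases hp : p.val % 2 = 0 <;> by_cases hq : q.val % 2 = 0
      · rw [hgE p hp, hgE q hq] at hpq
        have h1 := u_inj _ _ (Sum.inl_injective hpq)
        have h2 : p.val / 2 = q.val / 2 := congrArg Fin.val h1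
        exact Fin.ext (by omega)
      · rw [hgE p hp, hgO q hq] at hpq; exact absurd hpq Sum.inl_ne_inr
      · rw [hgO p hp, hgE q hq] at hpq; exact absurd hpq Sum.inr_ne_inl
      · rw [hgO p hp, hgO q hq] at hpq
        have h1 := QQ_inj _ _ (Sum.inr_injective hpq)
        have h2 : (p.val / 2 + 1) % ℓ = (q.val / 2 + 1) % ℓ := congrArg Fin.val h1
        have h3 := mod_inj (hdiv p) (hdiv q) h2
        exact Fin.ext (by omega)
    have gadj : ∀ p q : Fin (2*ℓ),
        (cycleG (2*ℓ)).Adj p q ↔ (incidence G).Adj (g p) (g q) := by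
      intro p q
      rw [cycle_adj]
      have hplt := p.isLt
      have hqlt := q.isLt
      by_cases hp : p.val % 2 = 0 <;> by_cases hq : q.val % 2 = 0
      · rw [hgE p hp, hgE q hq]
        refine iff_of_false ?_ (inc_adj_ll _ _ _)
        rintro ⟨hne, h | h⟩
        · rw [Nat.mod_eq_of_lt (by omega)] at h; omega
        · rw [Nat.mod_eq_of_lt (by omega)] at h; omega
      · rw [hgE p hp, hgO q hq, inc_adj_lr, step3' _ _ (hdiv p) (hmlt q)]
        have h2 : (q.val + 1) % (2*ℓ) = 2 * ((q.val / 2 + 1) % ℓ) := by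
          rw [show q.val + 1 = 2 * (q.val / 2 + 1) by omega, Nat.mul_mod_mul_left]
        constructor
        · rintro ⟨-, h | h⟩
          · rw [Nat.mod_eq_of_lt (by omega)] at h
            right
            have h3 : q.val / 2 = p.val / 2 := by omega
            rw [h3]
          · rw [h2] at h
            left; omega
        · rintro (h | h)
          · refine ⟨fun he => by have := congrArg Fin.val he; omega, Or.inr ?_⟩
            rw [h2]; omega
          · refine ⟨fun he => by have := congrArg Fin.val he; omega, Or.inl ?_⟩
            have h3 := mod_inj (hdiv q) (hdiv p) h
            rw [Nat.mod_eq_of_lt (by omega)]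
            omega
      · rw [hgO p hp, hgE q hq, inc_adj_rl, step3' _ _ (hdiv q) (hmlt p)]
        have h2 : (p.val + 1) % (2*ℓ) = 2 * ((p.val / 2 + 1) % ℓ) := by
          rw [show p.val + 1 = 2 * (p.val / 2 + 1) by omega, Nat.mul_mod_mul_left]
        constructor
        · rintro ⟨-, h | h⟩
          · rw [h2] at h
            left; omega
          · rw [Nat.mod_eq_of_lt (by omega)] at h
            right
            have h3 : p.val / 2 = q.val / 2 := by omega
            rw [h3]
        · rintro (h | h)
          · refine ⟨fun he => by have := congrArg Fin.val he; omega, Or.inl ?_⟩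
            rw [h2]; omega
          · refine ⟨fun he => by have := congrArg Fin.val he; omega, Or.inr ?_⟩
            have h3 := mod_inj (hdiv p) (hdiv q) h
            rw [Nat.mod_eq_of_lt (by omega)]
            omega
      · rw [hgO p hp, hgO q hq]
        refine iff_of_false ?_ (inc_adj_rr _ _ _)
        rintro ⟨hne, h | h⟩
        · have h2 : (p.val + 1) % (2*ℓ) = 2 * ((p.val / 2 + 1) % ℓ) := by
            rw [show p.val + 1 = 2 * (p.val / 2 + 1) by omega, Nat.mul_mod_mul_left]
          rw [h2] at h; omega
        · have h2 : (q.val + 1) % (2*ℓ) = 2 * ((q.val / 2 + 1) % ℓ) := by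
            rw [show q.val + 1 = 2 * (q.val / 2 + 1) by omega, Nat.mul_mod_mul_left]
          rw [h2] at h; omega
    exact hbal ℓ hl hlodd ⟨⟨g, ginj⟩, gadj⟩
  exact ⟨H, ⟨core G, (core G)ᶜ, hsplit⟩, hosf, hconn, hGsq⟩

end Reverse

theorem square_of_oddSunFree_split_iff {V : Type} [Fintype V] (G : SimpleGraph V) :
    (∃ H : SimpleGraph V, IsSplit H ∧ OddSunFree H ∧ H.Connected ∧ Gsq H = G) ↔
      BalancedGraph G ∧ cliqueIneq G := by
  classical
  constructor
  · rintro ⟨H, ⟨C, I, hsp⟩, hosf, hconn, rfl⟩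
    have hsf : ¬ InducedCopy (sunGraph 3) H := hosf 3 le_rfl (by decide)
    by_cases hs : ∀ a b : V, a = b
    · have hsp' : IsSplitPart H Set.univ ∅ := by
        refine ⟨Set.union_empty _, by simp, ?_, ?_⟩
        · intro x _ y _ hxy
          exact absurd (hs x y) hxy
        · intro a ha
          exact absurd ha (Set.notMem_empty a)
      have hN' : ∀ u ∈ (∅ : Set V), ∃ c ∈ (Set.univ : Set V), H.Adj u c :=
        fun u hu => absurd hu (Set.notMem_empty u)
      exact ⟨fwd_balanced hsp' hosf hN',
        fwd_ineq hsp' hsf hN' ⟨hconn.nonempty.some, Set.mem_univ _⟩⟩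
    · push_neg at hs
      obtain ⟨a, b, hab⟩ := hs
      have hN : ∀ u ∈ I, ∃ c ∈ C, H.Adj u c := by
        intro x hx
        have hex : ∃ y, y ≠ x := by
          by_cases h : a = x
          · exact ⟨b, fun hbx => hab (h.trans hbx.symm)⟩
          · exact ⟨a, h⟩
        obtain ⟨y, hy⟩ := hex
        obtain ⟨p⟩ := hconn.preconnected x y
        cases p with
        | nil => exact absurd rfl hy
        | cons h q => exact ⟨_, nbr_of_I hsp hx h, h⟩
      have hCne : C.Nonempty := by
        obtain ⟨v⟩ := hconn.nonempty
        by_cases hv : v ∈ C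
        · exact ⟨v, hv⟩
        · obtain ⟨c, hc, -⟩ := hN v (mem_I_of_not_C hsp hv)
          exact ⟨c, hc⟩
      exact ⟨fwd_balanced hsp hosf hN, fwd_ineq hsp hsf hN hCne⟩
  · rintro ⟨hbal, hineq⟩
    exact reverse_dir G hbal hineq
end

section
/- Let F be an induced subgraph of a graph G. Then the trunk T(F) is isomorphic to an induced subgraph of the trunk T(G), provided both G and F are non-complete and satisfy |⋂𝒞(G)| ≥ |𝒞(G)| and |⋂𝒞(F)| ≥ |𝒞(F)|. -/
open SimpleGraph

lemma exists_max_clique {V : Type} (G : SimpleGraph V) (Q : Set V) (hQ : G.IsClique Q) :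
    ∃ R ∈ maxCliques G, Q ⊆ R := by
  obtain ⟨m, hm, hmax⟩ := zorn_subset_nonempty {R | G.IsClique R}
    (fun c hc hchain _ => ⟨⋃₀ c, by
      intro u hu v hv huv
      obtain ⟨A, hA, huA⟩ := hu
      obtain ⟨B, hB, hvB⟩ := hv
      rcases hchain.total hA hB with h | h
      · exact hc hB (h huA) hvB huv
      · exact hc hA huA (h hvB) huv, fun s hs => Set.subset_sUnion_of_mem hs⟩) Q hQ
  exact ⟨m, ⟨hmax.1, fun R hR hsub => (hmax.2 hR hsub).antisymm' hsub⟩, hm⟩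

theorem trunk_monotone {V : Type} [Fintype V] (G : SimpleGraph V) (S : Set V)
    (hG : G ≠ ⊤) (hF : G.induce S ≠ ⊤)
    (hGc : cliqueIneq G) (hFc : cliqueIneq (G.induce S)) :
    InducedCopy (trunk (G.induce S)) (trunk G) := by
  classical
  set F := G.induce S with hFdef
  -- every maximal clique of F extends to a maximal clique of G meeting S exactly in it
  have ext : ∀ Q : ↥(maxCliques F), ∃ R ∈ maxCliques G,
      (Subtype.val '' (Q : Set ↥S)) ⊆ R := by
    intro Q
    apply exists_max_clique
    rintro _ ⟨u, hu, rfl⟩ _ ⟨v, hv, rfl⟩ huv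
    have : u ≠ v := fun h => huv (by rw [h])
    exact (Q.2.1 hu hv this : F.Adj u v)
  choose φ hφmem hφsub using ext
  have key : ∀ (Q : ↥(maxCliques F)) (v : ↥S), v ∈ (Q : Set ↥S) ↔ (v : V) ∈ φ Q := by
    intro Q v
    constructor
    · intro hv
      exact hφsub Q ⟨v, hv, rfl⟩
    · intro hv
      have hclique : F.IsClique (Subtype.val ⁻¹' (φ Q)) := by
        intro u hu w hw huw
        have : (u : V) ≠ (w : V) := fun h => huw (Subtype.ext h)
        exact (hφmem Q).1 hu hw this
      have hsub : (Q : Set ↥S) ⊆ Subtype.val ⁻¹' (φ Q) := by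
        intro u hu
        exact hφsub Q ⟨u, hu, rfl⟩
      have := Q.2.2 _ hclique hsub
      rw [this]
      exact hv
  have φinj : Function.Injective φ := by
    intro Q₁ Q₂ h
    apply Subtype.ext
    ext v
    rw [key Q₁ v, key Q₂ v, h]
  have hvert : ∀ v : ↥{v : ↥S | v ∉ core F}, ((v : ↥S) : V) ∉ core G := by
    rintro ⟨v, hv⟩ hmem
    simp only [Set.mem_setOf_eq, core, Set.mem_sInter, not_forall] at hv
    obtain ⟨Q, hQ, hvQ⟩ := hv
    exact hvQ ((key ⟨Q, hQ⟩ v).2 (hmem _ (hφmem ⟨Q, hQ⟩)))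
  refine ⟨⟨Sum.elim (fun Q => Sum.inl ⟨φ Q, hφmem Q⟩)
      (fun v => Sum.inr ⟨((v : ↥S) : V), hvert v⟩), ?_⟩, ?_⟩
  · rintro (Q₁ | v₁) (Q₂ | v₂) h
    · simp only [Sum.elim_inl, Sum.inl.injEq, Subtype.mk.injEq] at h
      exact congrArg Sum.inl (φinj h)
    · exact absurd h (by simp)
    · exact absurd h (by simp)
    · simp only [Sum.elim_inr, Sum.inr.injEq, Subtype.mk.injEq] at h
      exact congrArg Sum.inr (Subtype.ext (Subtype.ext h))
  · rintro (Q₁ | v₁) (Q₂ | v₂) <;>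
      simp only [trunk, SimpleGraph.fromRel_adj, Function.Embedding.coeFn_mk, DFunLike.coe, Sum.elim_inl,
        Sum.elim_inr, ne_eq, Sum.inl.injEq, Sum.inr.injEq, or_true, true_or, and_true, or_false,
        false_or, reduceCtorEq, not_false_eq_true, true_and, false_and, and_false, or_self,
        iff_false, not_and, iff_self, Subtype.mk.injEq]
    · exact ⟨fun h hh => h (φinj hh), fun h hh => h (congrArg φ hh)⟩
    · exact key Q₁ (v₂ : ↥S)
    · exact key Q₂ (v₁ : ↥S)
end
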